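/- Let C be a balanced braided monoidal category, i.e. a braided category with braiding c and a natural automorphism θ (the balancing) satisfying θ_I = id_I and θ_{X⊗Y} = c_{Y,X} ∘ c_{X,Y} ∘ (θ_X ⊗ θ_Y). Let F be an object with a commutative multiplication μ : F ⊗ F → F (i.e. μ ∘ c_{F,F} = μ), a unit η : I → F, and an invariant non-degenerate pairing β : F ⊗ F → I satisfying β ∘ (θ_F ⊗ id_F) = β ∘ (id_F ⊗ θ_F) = β ∘ θ_{F⊗F} composed appropriately, such that (F, μ, η, β) is a symmetric Frobenius algebra compatible with the balancing. Then θ_F = id_F. -/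

import Mathlib

/-!
Since `ε := β ∘ (id ⊗ η)` satisfies `β = ε ∘ μ` by invariance, commutativity of `μ` makes the
pairing braiding-invariant, `β ∘ c = β`. Symmetry then reads `β ∘ (θ ⊗ id) = β`, and
non-degeneracy (the zigzag identity) cancels the pairing, leaving `θ = id`.
-/

open CategoryTheory MonoidalCategory

namespace CategoryTheory

variable {C : Type*} [Category C] [MonoidalCategory C]

section Pairing

variable {F : C} (bet : F ⊗ F ⟶ 𝟙_ C)

theorem mul_comp_counit_eq_pairing {μ : F ⊗ F ⟶ F} {η : 𝟙_ C ⟶ F}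
    (mrunit : (F ◁ η) ≫ μ = (ρ_ F).hom)
    (binv : (μ ▷ F) ≫ bet = (α_ F F F).hom ≫ (F ◁ μ) ≫ bet) :
    μ ≫ (ρ_ F).inv ≫ (F ◁ η) ≫ bet = bet :=
  calc μ ≫ (ρ_ F).inv ≫ (F ◁ η) ≫ bet
      = (ρ_ (F ⊗ F)).inv ≫ ((F ⊗ F) ◁ η) ≫ (μ ▷ F) ≫ bet := by
        rw [rightUnitor_inv_naturality_assoc, whisker_exchange_assoc]
    _ = (F ◁ (ρ_ F).inv) ≫ (F ◁ ((F ◁ η) ≫ μ)) ≫ bet := by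
        rw [binv, associator_naturality_right_assoc]; simp
    _ = bet := by simp [mrunit]

theorem eq_of_whiskerRight_comp_pairing {δ : 𝟙_ C ⟶ F ⊗ F}
    (zigzag : (ρ_ F).inv ≫ (F ◁ δ) ≫ (α_ F F F).inv ≫ (bet ▷ F) ≫ (λ_ F).hom = 𝟙 F)
    {X : C} {f g : X ⟶ F} (h : (f ▷ F) ≫ bet = (g ▷ F) ≫ bet) : f = g := by
  have recover : ∀ f : X ⟶ F,
      f = (ρ_ X).inv ≫ (X ◁ δ) ≫ (α_ X F F).inv ≫ (((f ▷ F) ≫ bet) ▷ F) ≫ (λ_ F).hom := by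
    intro f
    calc f = f ≫ (ρ_ F).inv ≫ (F ◁ δ) ≫ (α_ F F F).inv ≫ (bet ▷ F) ≫ (λ_ F).hom := by
          rw [zigzag, Category.comp_id]
      _ = _ := by
          rw [rightUnitor_inv_naturality_assoc, ← whisker_exchange_assoc,
            associator_inv_naturality_left_assoc, comp_whiskerRight_assoc]
  rw [recover f, recover g, h]

end Pairing

theorem braiding_comp_pairing_of_comm [BraidedCategory C] {F : C} {μ : F ⊗ F ⟶ F}
    {bet : F ⊗ F ⟶ 𝟙_ C} {ε : F ⟶ 𝟙_ C} (mcomm : (β_ F F).hom ≫ μ = μ) (hbet : μ ≫ ε = bet) :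
    (β_ F F).hom ≫ bet = bet := by
  rw [← hbet, reassoc_of% mcomm]

end CategoryTheory

/-- In a balanced braided monoidal category, the balancing is automatically trivial on a
symmetric commutative Frobenius algebra: `θ_F = id_F`. -/
theorem balancing_trivial_on_symmetric_commutative_frobenius
    {C : Type*} [Category C] [MonoidalCategory C] [BraidedCategory C]
    (θ : ∀ X : C, X ⟶ X) [∀ X : C, IsIso (θ X)]
    (θnat : ∀ {X Y : C} (f : X ⟶ Y), f ≫ θ Y = θ X ≫ f)
    (θunit : θ (𝟙_ C) = 𝟙 (𝟙_ C))
    (θtensor : ∀ X Y : C, θ (X ⊗ Y) = (θ X ⊗ₘ θ Y) ≫ (β_ X Y).hom ≫ (β_ Y X).hom)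
    (F : C) (μ : F ⊗ F ⟶ F) (η : 𝟙_ C ⟶ F)
    (massoc : (μ ▷ F) ≫ μ = (α_ F F F).hom ≫ (F ◁ μ) ≫ μ)
    (mlunit : (η ▷ F) ≫ μ = (λ_ F).hom)
    (mrunit : (F ◁ η) ≫ μ = (ρ_ F).hom)
    (mcomm : (β_ F F).hom ≫ μ = μ)
    (bet : F ⊗ F ⟶ 𝟙_ C)
    (binv : (μ ▷ F) ≫ bet = (α_ F F F).hom ≫ (F ◁ μ) ≫ bet)
    (δ : 𝟙_ C ⟶ F ⊗ F)
    (z1 : (λ_ F).inv ≫ (δ ▷ F) ≫ (α_ F F F).hom ≫ (F ◁ bet) ≫ (ρ_ F).hom = 𝟙 F)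
    (z2 : (ρ_ F).inv ≫ (F ◁ δ) ≫ (α_ F F F).inv ≫ (bet ▷ F) ≫ (λ_ F).hom = 𝟙 F)
    (bbal : (θ F ▷ F) ≫ bet = (F ◁ θ F) ≫ bet)
    (bsym : (θ F ▷ F) ≫ (β_ F F).hom ≫ bet = bet) :
    θ F = 𝟙 F := by
  have hbraid : (β_ F F).hom ≫ bet = bet :=
    braiding_comp_pairing_of_comm mcomm (mul_comp_counit_eq_pairing bet mrunit binv)
  refine eq_of_whiskerRight_comp_pairing bet z2 ?_
  rw [id_whiskerRight, Category.id_comp, ← hbraid, bsym, hbraid]
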